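/- arXiv:2108.01195 — 3 statements merged into one kernel-verified Lean document; each statement's English description precedes it below -/
import Mathlib

section
/- Let X be a Hausdorff k-space in which for every compact set F and every accumulation point x of F there is a sequence of points of F \ {x} converging to x. Then for every closed set F and every accumulation point x of F there is a sequence of points of F \ {x} converging to x. -/
open Filter

/-- In a Hausdorff k-space, if every accumulation point of a compact set is a
limit of a sequence from the set minus the point, then the same holds for all
closed sets. -/
theorem stmt_7 {X : Type*} [TopologicalSpace X] [T2Space X]
    (hk : ∀ A : Set X, (∀ K : Set X, IsCompact K → IsClosed (A ∩ K)) → IsClosed A)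
    (hcuf : ∀ F : Set X, IsCompact F → ∀ x : X, x ∈ closure (F \ {x}) →
      ∃ u : ℕ → X, (∀ n, u n ∈ F \ {x}) ∧ Tendsto u atTop (nhds x)) :
    ∀ F : Set X, IsClosed F → ∀ x : X, x ∈ closure (F \ {x}) →
      ∃ u : ℕ → X, (∀ n, u n ∈ F \ {x}) ∧ Tendsto u atTop (nhds x) := by
  intro F hF x hx
  set A : Set X := F \ {x} with hA
  have hAnc : ¬ IsClosed A := by
    intro h
    have : x ∈ A := h.closure_subset hx
    exact this.2 rfl
  obtain ⟨K, hK, hKnc⟩ : ∃ K : Set X, IsCompact K ∧ ¬ IsClosed (A ∩ K) := by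
    by_contra h
    push_neg at h
    exact hAnc (hk A fun K hK => h K hK)
  have hKclosed : IsClosed K := hK.isClosed
  have hFK : IsCompact (F ∩ K) := hK.inter_left hF
  -- there is a point in closure (A ∩ K) not in A ∩ K; it must be x
  obtain ⟨y, hyc, hyn⟩ : ∃ y, y ∈ closure (A ∩ K) ∧ y ∉ A ∩ K := by
    by_contra h
    push_neg at h
    exact hKnc (isClosed_of_closure_subset h)
  have hyF : y ∈ F :=
    hF.closure_subset (closure_mono (Set.inter_subset_left.trans Set.diff_subset) hyc)
  have hyK : y ∈ K := hKclosed.closure_subset (closure_mono Set.inter_subset_right hyc)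
  have hyx : y = x := by
    by_contra hne
    exact hyn ⟨⟨hyF, hne⟩, hyK⟩
  subst hyx
  have hxc : y ∈ closure ((F ∩ K) \ {y}) := by
    have : (F ∩ K) \ {y} = A ∩ K := by
      ext z
      simp only [hA, Set.mem_diff, Set.mem_inter_iff, Set.mem_singleton_iff]
      tauto
    rw [this]; exact hyc
  obtain ⟨u, hu, htu⟩ := hcuf (F ∩ K) hFK y hxc
  exact ⟨u, fun n => ⟨(hu n).1.1, (hu n).2⟩, htu⟩
end

section
/- With X and the metric d of the previous construction, if every metric space (A_n, ρ_n) is compact, then the metric space (X, d) is compact. -/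
/-- If in the construction of the metric `d` on `X = {∞} ∪ ⋃ₙ Aₙ` every metric
space `(Aₙ, ρₙ)` is compact, then the metric space `(X, d)` is compact. -/
theorem stmt_9 {Y : Type*} (A : ℕ → Set Y) (infty : Y) (X : Set Y)
    (hX : X = insert infty (⋃ (n : ℕ) (_ : 1 ≤ n), A n))
    (hdisj : ∀ m n, m ≠ n → Disjoint (A m) (A n))
    (hne : ∀ n, 1 ≤ n → (A n).Nonempty)
    (hinfty : ∀ n, 1 ≤ n → infty ∉ A n)
    [∀ n, MetricSpace (A n)]
    (hcompact : ∀ n, 1 ≤ n → CompactSpace (A n))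
    [MetricSpace X]
    (hd_diff : ∀ p q : ℕ, 1 ≤ p → 1 ≤ q → p ≠ q → ∀ (x y : X),
      (x : Y) ∈ A p → (y : Y) ∈ A q → dist x y = max (1 / (p : ℝ)) (1 / (q : ℝ)))
    (hd_same : ∀ n, 1 ≤ n → ∀ (x y : X) (hx : (x : Y) ∈ A n) (hy : (y : Y) ∈ A n),
      dist x y = min (dist (⟨(x : Y), hx⟩ : A n) (⟨(y : Y), hy⟩ : A n)) (1 / (n : ℝ)))
    (hinfX : infty ∈ X)
    (hd_infty : ∀ n, 1 ≤ n → ∀ (x : X), (x : Y) ∈ A n →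
      dist x (⟨infty, hinfX⟩ : X) = 1 / (n : ℝ)) :
    CompactSpace X := by
  classical
  have hXsub : ∀ n, 1 ≤ n → A n ⊆ X := by
    intro n hn y hy
    rw [hX]
    exact Set.mem_insert_iff.mpr (Or.inr (Set.mem_iUnion.mpr ⟨n, Set.mem_iUnion.mpr ⟨hn, hy⟩⟩))
  set ipt : X := ⟨infty, hinfX⟩ with hipt
  -- each piece of X coming from `A n` is compact
  have hS : ∀ n, 1 ≤ n → IsCompact {x : X | (x : Y) ∈ A n} := by
    intro n hn
    have := hcompact n hn
    let f : A n → X := fun a => ⟨a.1, hXsub n hn a.2⟩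
    have hf : Continuous f := by
      apply LipschitzWith.continuous (K := 1)
      apply LipschitzWith.of_dist_le_mul
      intro a b
      have h := hd_same n hn (f a) (f b) a.2 b.2
      calc dist (f a) (f b) = min (dist a b) (1 / (n : ℝ)) := h
        _ ≤ dist a b := min_le_left _ _
        _ = 1 * dist a b := (one_mul _).symm
    have himg : IsCompact (f '' Set.univ) := IsCompact.image isCompact_univ hf
    have heq : {x : X | (x : Y) ∈ A n} = f '' Set.univ := by
      ext x
      constructor
      · intro hx
        exact ⟨⟨x.1, hx⟩, Set.mem_univ _, Subtype.ext rfl⟩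
      · rintro ⟨a, -, rfl⟩
        exact a.2
    rw [heq]
    exact himg
  constructor
  apply isCompact_of_finite_subcover
  intro ι U hU hcov
  have h0 : ipt ∈ ⋃ i, U i := hcov (Set.mem_univ _)
  obtain ⟨i₀, hi₀⟩ := Set.mem_iUnion.mp h0
  obtain ⟨ε, hε, hball⟩ := Metric.isOpen_iff.mp (hU i₀) ipt hi₀
  set N : ℕ := ⌈1 / ε⌉₊ + 1 with hN
  have hNε : 1 / ε < (N : ℝ) := by
    have := Nat.le_ceil (1 / ε)
    push_cast [hN]
    linarith
  have hfin : ∀ n : ℕ, ∃ t : Finset ι, 1 ≤ n → {x : X | (x : Y) ∈ A n} ⊆ ⋃ i ∈ t, U i := by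
    intro n
    by_cases hn : 1 ≤ n
    · obtain ⟨t, ht⟩ := (hS n hn).elim_finite_subcover U hU (fun x _ => hcov (Set.mem_univ x))
      exact ⟨t, fun _ => ht⟩
    · exact ⟨∅, fun h => absurd h hn⟩
  choose t ht using hfin
  refine ⟨insert i₀ ((Finset.range N).biUnion t), fun x _ => ?_⟩
  have hx : (x : Y) ∈ insert infty (⋃ (n : ℕ) (_ : 1 ≤ n), A n) := by rw [← hX]; exact x.2
  rcases Set.mem_insert_iff.mp hx with hx | hx
  · have hxe : x = ipt := Subtype.ext hx
    rw [hxe]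
    exact Set.mem_biUnion (Finset.mem_insert_self _ _) hi₀
  · obtain ⟨n, hmem⟩ := Set.mem_iUnion.mp hx
    obtain ⟨hn1, hxA⟩ := Set.mem_iUnion.mp hmem
    by_cases hlt : n < N
    · obtain ⟨i, hi, hxi⟩ := Set.mem_iUnion₂.mp (ht n hn1 hxA)
      exact Set.mem_biUnion
        (Finset.mem_insert_of_mem (Finset.mem_biUnion.mpr ⟨n, Finset.mem_range.mpr hlt, hi⟩)) hxi
    · push_neg at hlt
      have hnpos : (0 : ℝ) < n := by exact_mod_cast hn1
      have hNn : 1 / ε < (n : ℝ) := lt_of_lt_of_le hNε (by exact_mod_cast hlt)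
      have hdist : dist x ipt < ε := by
        rw [hd_infty n hn1 x hxA]
        rw [div_lt_iff₀ hnpos]
        have := (div_lt_iff₀ hε).mp hNn
        linarith
      exact Set.mem_biUnion (Finset.mem_insert_self _ _) (hball hdist)
end

section
/- Let X be a second-countable Hausdorff space and A ⊆ X an uncountable subset such that the subspace A is a sequential space. Then A contains an infinite subset closed in X. -/
/-!
An uncountable second-countable space is not discrete, so `A` has an accumulation point `a`.
Then `A \ {a}` is not closed in `A`, hence, `A` being sequential, not sequentially closed: some
sequence of points of `A \ {a}` converges to `a`. Its range together with `a` is compact, hence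
closed in the Hausdorff space `X`, and it is infinite because `a` is not attained.
-/

open Set Filter Topology

theorem exists_nhdsNE_neBot_of_not_countable {Y : Type*} [TopologicalSpace Y]
    [SecondCountableTopology Y] (hY : ¬ Countable Y) : ∃ a : Y, (𝓝[≠] a).NeBot := by
  by_contra! h
  have : DiscreteTopology Y := discreteTopology_iff_nhds_ne.2 h
  exact hY (TopologicalSpace.separableSpace_iff_countable.1 inferInstance)

theorem exists_seq_ne_tendsto_of_nhdsNE_neBot {Y : Type*} [TopologicalSpace Y]
    [SequentialSpace Y] {a : Y} (ha : (𝓝[≠] a).NeBot) :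
    ∃ u : ℕ → Y, (∀ n, u n ≠ a) ∧ Tendsto u atTop (𝓝 a) := by
  have ha_mem : a ∈ closure ({a}ᶜ : Set Y) := mem_closure_iff_nhdsWithin_neBot.2 ha
  have h_not_seqClosed : ¬ IsSeqClosed ({a}ᶜ : Set Y) := fun h =>
    h.isClosed.closure_subset ha_mem rfl
  simp only [IsSeqClosed, not_forall, exists_prop] at h_not_seqClosed
  obtain ⟨u, p, hu, hup, hp⟩ := h_not_seqClosed
  rw [mem_compl_singleton_iff, not_not] at hp
  exact ⟨u, hu, hp ▸ hup⟩

theorem Filter.Tendsto.infinite_range_of_forall_ne {Y : Type*} [TopologicalSpace Y]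
    [T1Space Y] {u : ℕ → Y} {a : Y} (hu : Tendsto u atTop (𝓝 a)) (hne : ∀ n, u n ≠ a) :
    (range u).Infinite := by
  intro hfin
  have ha : a ∈ closure (range u) := mem_closure_of_tendsto hu (.of_forall mem_range_self)
  obtain ⟨n, hn⟩ := hfin.isClosed.closure_eq ▸ ha
  exact hne n hn

/-- In a second-countable Hausdorff space, an uncountable subset which is a
sequential space in the subspace topology contains an infinite subset closed in
the whole space. -/
theorem stmt_14 {X : Type*} [TopologicalSpace X] [T2Space X]
    [SecondCountableTopology X] {A : Set X} (hA : ¬ A.Countable)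
    (hseq : SequentialSpace A) :
    ∃ C : Set X, C ⊆ A ∧ C.Infinite ∧ IsClosed C := by
  obtain ⟨a, ha⟩ := exists_nhdsNE_neBot_of_not_countable (countable_coe_iff.not.2 hA)
  obtain ⟨u, hua, hu⟩ := exists_seq_ne_tendsto_of_nhdsNE_neBot ha
  have hu' : Tendsto (fun n => (u n : X)) atTop (𝓝 (a : X)) :=
    (continuous_subtype_val.tendsto a).comp hu
  refine ⟨insert (a : X) (range fun n => (u n : X)), ?_, ?_, hu'.isCompact_insert_range.isClosed⟩
  · rintro x (rfl | ⟨n, rfl⟩)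
    exacts [a.2, (u n).2]
  · exact (hu'.infinite_range_of_forall_ne fun n => Subtype.coe_ne_coe.2 (hua n)).mono
      (subset_insert _ _)
end
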